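/- For every integer k one has (5 + √2)/(5 − √2) ≠ ((1 + √2)/(√2 − 1))^k, where the power is the integer power (zpow) in the real numbers. -/

import Mathlib

/-!
With `u = (1 + √2)/(√2 − 1) = 3 + 2√2` one has `1 < (5 + √2)/(5 − √2) < u`, so the ratio lies
strictly between `u ^ 0` and `u ^ 1`; as `u > 1`, the integer powers of `u` are strictly increasing
in the exponent, and none of them lands in that gap.
-/

open Real

theorem ne_zpow_of_zpow_lt_of_lt_zpow_add_one {α : Type*} [Semifield α] [LinearOrder α]
    [IsStrictOrderedRing α] {a x : α} (ha : 1 < a) {n : ℤ} (h₁ : a ^ n < x) (h₂ : x < a ^ (n + 1))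
    (k : ℤ) : x ≠ a ^ k := by
  rintro rfl
  rw [zpow_lt_zpow_iff_right₀ ha] at h₁ h₂
  omega

theorem one_lt_five_add_sqrt_two_div_five_sub_sqrt_two : 1 < (5 + √2) / (5 - √2) := by
  have hs := sqrt_two_lt_three_halves
  rw [one_lt_div (by linarith)]
  linarith [one_lt_sqrt_two]

theorem five_add_sqrt_two_div_five_sub_sqrt_two_lt :
    (5 + √2) / (5 - √2) < (1 + √2) / (√2 - 1) := by
  have hs := sqrt_two_lt_three_halves
  rw [div_lt_div_iff₀ (by linarith) (by linarith [one_lt_sqrt_two])]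
  -- using `√2 ^ 2 = 2`, this is `4√2 - 3 < 4√2 + 3`
  nlinarith [sq_sqrt (zero_le_two : (0 : ℝ) ≤ 2)]

/-- For every integer `k`, `(5 + √2)/(5 − √2) ≠ ((1 + √2)/(√2 − 1))^k`. -/
theorem ratio_ne_unit_zpow (k : ℤ) :
    (5 + Real.sqrt 2) / (5 - Real.sqrt 2) ≠ ((1 + Real.sqrt 2) / (Real.sqrt 2 - 1)) ^ k := by
  have hlt := five_add_sqrt_two_div_five_sub_sqrt_two_lt
  have hone := one_lt_five_add_sqrt_two_div_five_sub_sqrt_two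
  refine ne_zpow_of_zpow_lt_of_lt_zpow_add_one (hone.trans hlt) (n := 0) ?_ ?_ k
  · rwa [zpow_zero]
  · rwa [zero_add, zpow_one]
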